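/- For any finite sequence τ of distinct natural numbers and any natural number k not occurring in τ: des f(k,τ) = des τ if and only if aix f(k,τ) = aix τ + 1 (in particular aix f(k,τ) > 0); and des f(k,τ) > des τ if and only if aix f(k,τ) = 0. -/

import Mathlib

namespace PaperStats

/-- `des w` is the number of descents of the word `w` (0-indexed positions `i`
with `w(i) > w(i+1)`). -/
def des (w : List ℕ) : ℕ :=
  ((Finset.range (w.length - 1)).filter fun i => w.getD (i + 1) 0 < w.getD i 0).card

/-- `inv w` is the number of inversions of the word `w`: pairs of positions
`i < j` with `w(i) > w(j)`. -/
def inv (w : List ℕ) : ℕ :=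
  ((Finset.range w.length ×ˢ Finset.range w.length).filter
    fun p => p.1 < p.2 ∧ w.getD p.2 0 < w.getD p.1 0).card

/-- An inversion `(i,j)` of `w` is admissible if either `w(j) < w(j+1)`
(`j` is not the last position and is followed by an ascent), or there is a
position `k` strictly between `i` and `j` with `w(j) > w(k)`. -/
def IsAdmissible (w : List ℕ) (i j : ℕ) : Prop :=
  (j + 1 < w.length ∧ w.getD j 0 < w.getD (j + 1) 0) ∨
    ∃ k, i < k ∧ k < j ∧ w.getD k 0 < w.getD j 0

instance (w : List ℕ) (i j : ℕ) : Decidable (IsAdmissible w i j) :=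
  decidable_of_iff ((j + 1 < w.length ∧ w.getD j 0 < w.getD (j + 1) 0) ∨
      ∃ k ∈ Finset.Ioo i j, w.getD k 0 < w.getD j 0) (by
    unfold IsAdmissible
    simp only [Finset.mem_Ioo, and_assoc])

/-- `ai w` is the number of admissible inversions of `w`. -/
def ai (w : List ℕ) : ℕ :=
  ((Finset.range w.length ×ˢ Finset.range w.length).filter
    fun p => p.1 < p.2 ∧ w.getD p.2 0 < w.getD p.1 0 ∧ IsAdmissible w p.1 p.2).card

/-- `aid w = ai w + des w`. -/
def aid (w : List ℕ) : ℕ := ai w + des w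

/-- The statistic `aix`, defined recursively: `aix ∅ = 0`; writing a nonempty
word as `π = α m β`, where `m` is the smallest letter and `α` is the maximal
prefix not containing `m`, one has `aix π = 1 + aix β` if `α = ∅`,
`aix π = 0` if `β = ∅` (and `α ≠ ∅`), and `aix π = aix α` otherwise. -/
def aix : List ℕ → ℕ
  | [] => 0
  | x :: xs =>
    if (x :: xs).takeWhile (fun a => decide (a ≠ xs.foldr min x)) = [] then
      1 + aix (((x :: xs).dropWhile (fun a => decide (a ≠ xs.foldr min x))).tail)
    else if ((x :: xs).dropWhile (fun a => decide (a ≠ xs.foldr min x))).tail = [] then 0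
    else aix ((x :: xs).takeWhile (fun a => decide (a ≠ xs.foldr min x)))
termination_by w => w.length
decreasing_by
  all_goals try simp only [List.foldr_subtype, List.unattach_attach] at *
  · have h1 := (List.dropWhile_sublist (l := x :: xs) (fun a => decide (a ≠ xs.foldr min x))).length_le
    have h2 := List.length_tail (l := (x :: xs).dropWhile (fun a => decide (a ≠ xs.foldr min x)))
    simp only [List.length_cons] at *
    omega
  · rename_i hα hβ
    have h0 : ((x :: xs).takeWhile (fun a => decide (a ≠ xs.foldr min x))) ++
        ((x :: xs).dropWhile (fun a => decide (a ≠ xs.foldr min x))) = x :: xs :=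
      List.takeWhile_append_dropWhile ..
    have h1 : ((x :: xs).dropWhile (fun a => decide (a ≠ xs.foldr min x))) ≠ [] := by
      intro h
      apply hβ
      rw [h]
      rfl
    have h2 := congrArg List.length h0
    simp only [List.length_append, List.length_cons] at h2
    have h3 : 0 < ((x :: xs).dropWhile (fun a => decide (a ≠ xs.foldr min x))).length :=
      List.length_pos_iff.mpr h1
    simp only [List.length_cons]
    omega

/-- The map `f(k,τ)`: with `m` the smallest letter of `τ` together with `k`
(`k` not occurring in `τ`), and `τ = α m β` with `α` the maximal prefix of `τ`
avoiding `m`: `f(k,∅) = k`; `f(k,τ) = kτ` if `k = m`; and for `k > m`,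
`f(k,τ) = f(k,β) m` if `α = ∅`, `f(k,τ) = k m α` if `β = ∅`, and
`f(k,τ) = f(k,α) m β` otherwise. -/
def fkt (k : ℕ) : List ℕ → List ℕ
  | [] => [k]
  | x :: xs =>
    if k < xs.foldr min x then k :: x :: xs
    else if (x :: xs).takeWhile (fun a => decide (a ≠ xs.foldr min x)) = [] then
      fkt k (((x :: xs).dropWhile (fun a => decide (a ≠ xs.foldr min x))).tail) ++
        [xs.foldr min x]
    else if ((x :: xs).dropWhile (fun a => decide (a ≠ xs.foldr min x))).tail = [] then
      k :: xs.foldr min x :: ((x :: xs).takeWhile (fun a => decide (a ≠ xs.foldr min x)))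
    else
      fkt k ((x :: xs).takeWhile (fun a => decide (a ≠ xs.foldr min x))) ++
        xs.foldr min x :: ((x :: xs).dropWhile (fun a => decide (a ≠ xs.foldr min x))).tail
termination_by w => w.length
decreasing_by
  all_goals try simp only [List.foldr_subtype, List.unattach_attach] at *
  · have h1 := (List.dropWhile_sublist (l := x :: xs) (fun a => decide (a ≠ xs.foldr min x))).length_le
    have h2 := List.length_tail (l := (x :: xs).dropWhile (fun a => decide (a ≠ xs.foldr min x)))
    simp only [List.length_cons] at *
    omega
  · rename_i hk hα hβ
    have h0 : ((x :: xs).takeWhile (fun a => decide (a ≠ xs.foldr min x))) ++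
        ((x :: xs).dropWhile (fun a => decide (a ≠ xs.foldr min x))) = x :: xs :=
      List.takeWhile_append_dropWhile ..
    have h1 : ((x :: xs).dropWhile (fun a => decide (a ≠ xs.foldr min x))) ≠ [] := by
      intro h
      apply hβ
      rw [h]
      rfl
    have h2 := congrArg List.length h0
    simp only [List.length_append, List.length_cons] at h2
    have h3 : 0 < ((x :: xs).dropWhile (fun a => decide (a ≠ xs.foldr min x))).length :=
      List.length_pos_iff.mpr h1
    simp only [List.length_cons]
    omega

/-- `ini w` is the first letter of `w`. -/
def ini (w : List ℕ) : ℕ := w.headD 0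

/-- The word of a permutation `π ∈ S_n`, namely `π(1) π(2) … π(n)`
(with values in `{1, …, n}`). -/
def permList {n : ℕ} (π : Equiv.Perm (Fin n)) : List ℕ :=
  List.ofFn fun i => (π i : ℕ) + 1

/-- The bijection `φ`: `φ(π) = f(π(1), f(π(2), ⋯ f(π(n), ∅) ⋯ ))`. -/
def phiW (w : List ℕ) : List ℕ := w.foldr fkt []

/-- Helper: `decRun l` splits `l` into its maximal weakly decreasing prefix
and the rest. -/
def decRun : List ℕ → List ℕ × List ℕ
  | [] => ([], [])
  | [x] => ([x], [])
  | x :: y :: rest =>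
    if y ≤ x then ((x :: (decRun (y :: rest)).1), (decRun (y :: rest)).2)
    else ([x], y :: rest)

theorem decRun_append : ∀ l : List ℕ, (decRun l).1 ++ (decRun l).2 = l
  | [] => rfl
  | [x] => rfl
  | x :: y :: rest => by
    rw [decRun]
    split
    · simpa using decRun_append (y :: rest)
    · rfl

/-- Helper computing the hook factorization of a word from its reversal: the
rightmost hook of the word starts at its rightmost descent top, i.e. it is
obtained by extending the maximal weakly decreasing prefix of the reversed word
by one more letter; the process is repeated on what remains, and when no
letters usable for a hook remain the word left over is the increasing part
`π₀`. The result is `(π₀, [π₁, …, π_k])`. -/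
def hookRev (r : List ℕ) : List ℕ × List (List ℕ) :=
  match h : (decRun r).2 with
  | [] => (r.reverse, [])
  | z :: rest =>
    ((hookRev rest).1, (hookRev rest).2 ++ [z :: (decRun r).1.reverse])
termination_by r.length
decreasing_by
  have h2 := congrArg List.length (decRun_append r)
  rw [h] at h2
  simp only [List.length_append, List.length_cons] at h2
  omega

/-- The hook factorization `(π₀, [π₁, …, π_k])` of a word
`w = π₀ π₁ ⋯ π_k`, where `π₀` is increasing and each `π_i`, `i ≥ 1`, is a
hook. -/
def hookSplit (w : List ℕ) : List ℕ × List (List ℕ) := hookRev w.reverse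

/-- `pix w` is the length of the initial increasing factor `π₀` in the hook
factorization of `w`. -/
def pix (w : List ℕ) : ℕ := (hookSplit w).1.length

/-- `lec w` is the sum of the numbers of inversions of the hooks in the hook
factorization of `w`. -/
def lec (w : List ℕ) : ℕ := ((hookSplit w).2.map inv).sum

/-- A word `w(1) … w(r)` with `r ≥ 2` is a hook if
`w(1) > w(2) ≤ w(3) ≤ ⋯ ≤ w(r)`. -/
def IsHook (w : List ℕ) : Prop :=
  ∃ a b rest, w = a :: b :: rest ∧ b < a ∧ List.Chain' (· ≤ ·) (b :: rest)

/-- `w(i)` is a left-to-right maximum of `w` if `w(k) < w(i)` for all `k < i`. -/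
def IsLRMax (w : List ℕ) (i : ℕ) : Prop := ∀ k < i, w.getD k 0 < w.getD i 0

instance (w : List ℕ) (i : ℕ) : Decidable (IsLRMax w i) := by
  unfold IsLRMax; infer_instance

/-- `mix w` counts the pairs of positions `i < j` such that either
`w(i) > w(j)` and `w(i)` is a left-to-right maximum, or `w(i) < w(j)` and
there is `k < i` with `w(k) > w(j)`. -/
def mix (w : List ℕ) : ℕ :=
  ((Finset.range w.length ×ˢ Finset.range w.length).filter fun p =>
    p.1 < p.2 ∧ ((w.getD p.2 0 < w.getD p.1 0 ∧ IsLRMax w p.1) ∨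
      (w.getD p.1 0 < w.getD p.2 0 ∧ ∃ k ∈ Finset.range p.1, w.getD p.2 0 < w.getD k 0))).card

/-- `das w` counts the positions `i` such that either `w(i) > w(i+1)` and
`w(i)` is a left-to-right maximum, or `w(i) < w(i+1)` and there is `k < i`
with `w(k) > w(i+1)`. -/
def das (w : List ℕ) : ℕ :=
  ((Finset.range (w.length - 1)).filter fun i =>
    (w.getD (i + 1) 0 < w.getD i 0 ∧ IsLRMax w i) ∨
      (w.getD i 0 < w.getD (i + 1) 0 ∧ ∃ k ∈ Finset.range i, w.getD (i + 1) 0 < w.getD k 0)).card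

/-- The values of the left-to-right maxima of a word, listed in increasing
order (which is also their order of occurrence). -/
def lrMaxima : List ℕ → List ℕ
  | [] => []
  | x :: xs => x :: lrMaxima (xs.filter fun a => decide (x < a))
termination_by l => l.length
decreasing_by
  simp only [List.length_unattach, List.length_cons]
  exact Nat.lt_succ_of_le ((List.length_filter_le _ _).trans (List.length_attach).le)

/-- `Bset w m` is the list of entries of `w` that are smaller than `m` and lie
to the right of (the first occurrence of) `m` in `w`. -/
def Bset (w : List ℕ) (m : ℕ) : List ℕ :=
  ((w.dropWhile fun a => decide (a ≠ m)).tail).filter fun a => decide (a < m)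

/-- Helper for `psiS`: replace the letters satisfying `P`, in order, by the
letters of the first list. -/
def replaceSub (P : ℕ → Bool) : List ℕ → List ℕ → List ℕ
  | _, [] => []
  | rs, x :: xs =>
    if P x then rs.headD x :: replaceSub P rs.tail xs else x :: replaceSub P rs xs

/-- `psiS S w` is `ψ_S(w)`: the result of reversing, in place, the subword of
`w` consisting of the entries belonging to `S`. -/
def psiS (S : List ℕ) (w : List ℕ) : List ℕ :=
  replaceSub (fun a => decide (a ∈ S)) ((w.filter fun a => decide (a ∈ S)).reverse) w

/-- Helper applying the alternating composition
`ψ_{B₁} ∘ ψ_{B₂ ∩ B₁} ∘ ψ_{B₂} ∘ ⋯ ∘ ψ_{B_{k-1}} ∘ ψ_{B_k ∩ B_{k-1}} ∘ ψ_{B_k}`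
to `w`, given the list `[B_k, B_{k-1}, …, B₁]`. -/
def psiChain : List (List ℕ) → List ℕ → List ℕ
  | [], w => w
  | [B], w => psiS B w
  | B :: B' :: rest, w => psiChain (B' :: rest) (psiS (B.inter B') (psiS B w))

/-- The Brändén–Claesson bijection `ψ`. -/
def psi (w : List ℕ) : List ℕ :=
  psiChain (((lrMaxima w).map (Bset w)).reverse) w

/-! Both `fkt` and `aix` recurse along the factorization `τ = α m β` at the minimum `m`, so one
induction along that factorization handles them together. If `k < m`, then `f(k,τ) = kτ` keeps the
descents and `aix` grows by one. If `α = ∅`, then `f(k,τ) = f(k,β) m` ends in its minimum, so its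
`aix` is `0`, and the final `m` is a new descent. If `β = ∅`, then `f(k,τ) = k m α` trades the
descent before `m` for the one after `k`, while `aix` goes from `aix (α m) = 0` to `aix k = 1`.
Otherwise `des` and `aix` of `f(k,α) m β` and of `α m β` differ exactly as those of `f(k,α)` and
`α` do. The two alternatives exclude each other, because `aix τ + 1 ≠ 0`. -/

theorem le_foldr_min_iff {c x : ℕ} {xs : List ℕ} :
    c ≤ xs.foldr min x ↔ ∀ a ∈ x :: xs, c ≤ a := by
  induction xs with
  | nil => simp
  | cons y ys ih => simp only [List.foldr_cons, le_min_iff, ih, List.forall_mem_cons]; tauto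

theorem foldr_min_eq_of_append_cons {x m : ℕ} {xs A B : List ℕ} (h : x :: xs = A ++ m :: B)
    (hA : ∀ a ∈ A, m < a) (hB : ∀ b ∈ B, m ≤ b) : xs.foldr min x = m := by
  have hle : ∀ a ∈ x :: xs, m ≤ a := by
    rw [h]; simp only [List.mem_append, List.mem_cons]
    rintro a (ha | rfl | ha)
    exacts [(hA a ha).le, le_rfl, hB a ha]
  exact le_antisymm (le_foldr_min_iff.mp le_rfl m (by simp [h])) (le_foldr_min_iff.mpr hle)

theorem takeWhile_append_cons_ne {m : ℕ} {A B : List ℕ} (hA : ∀ a ∈ A, a ≠ m) :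
    (A ++ m :: B).takeWhile (fun a => decide (a ≠ m)) = A := by
  rw [List.takeWhile_append_of_pos (by simpa using hA)]
  simp

theorem dropWhile_append_cons_ne {m : ℕ} {A B : List ℕ} (hA : ∀ a ∈ A, a ≠ m) :
    (A ++ m :: B).dropWhile (fun a => decide (a ≠ m)) = m :: B := by
  rw [List.dropWhile_append_of_pos (by simpa using hA)]
  simp

theorem exists_eq_append_cons_min (x : ℕ) (xs : List ℕ) :
    ∃ A m B, x :: xs = A ++ m :: B ∧ (∀ a ∈ A, m < a) ∧ ∀ b ∈ B, m ≤ b := by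
  induction xs generalizing x with
  | nil => exact ⟨[], x, [], rfl, by simp, by simp⟩
  | cons y ys ih =>
    obtain ⟨A, m, B, h, hA, hB⟩ := ih y
    by_cases hxm : x ≤ m
    · refine ⟨[], x, y :: ys, rfl, by simp, ?_⟩
      rw [h]; simp only [List.mem_append, List.mem_cons]
      rintro b (hb | rfl | hb)
      exacts [hxm.trans (hA b hb).le, hxm, hxm.trans (hB b hb)]
    · refine ⟨x :: A, m, B, by rw [h]; rfl, ?_, hB⟩
      simp only [List.forall_mem_cons]
      exact ⟨by omega, hA⟩

theorem induction_on_append_cons_min {P : List ℕ → Prop} (nil : P [])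
    (append_cons : ∀ A m B, (∀ a ∈ A, m < a) → (∀ b ∈ B, m ≤ b) → P A → P B → P (A ++ m :: B))
    (l : List ℕ) : P l := by
  induction h : l.length using Nat.strong_induction_on generalizing l with
  | _ n ih =>
  rcases l with _ | ⟨x, xs⟩
  · exact nil
  obtain ⟨A, m, B, hl, hA, hB⟩ := exists_eq_append_cons_min x xs
  have hlen := congrArg List.length hl
  simp only [List.length_cons, List.length_append] at hlen h
  rw [hl]
  exact append_cons A m B hA hB (ih A.length (by omega) A rfl) (ih B.length (by omega) B rfl)

theorem aix_append_cons {m : ℕ} {A B : List ℕ} (hA : ∀ a ∈ A, m < a) (hB : ∀ b ∈ B, m ≤ b) :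
    aix (A ++ m :: B) = if A = [] then 1 + aix B else if B = [] then 0 else aix A := by
  obtain ⟨x, xs, h⟩ := List.exists_cons_of_ne_nil (List.append_ne_nil_of_right_ne_nil A
    (List.cons_ne_nil m B))
  have hne : ∀ a ∈ A, a ≠ m := fun a ha => (hA a ha).ne'
  rw [h, aix.eq_2, foldr_min_eq_of_append_cons h.symm hA hB, ← h,
    takeWhile_append_cons_ne hne, dropWhile_append_cons_ne hne, List.tail_cons]

theorem fkt_append_cons (k : ℕ) {m : ℕ} {A B : List ℕ} (hA : ∀ a ∈ A, m < a)
    (hB : ∀ b ∈ B, m ≤ b) :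
    fkt k (A ++ m :: B) =
      if k < m then k :: (A ++ m :: B) else if A = [] then fkt k B ++ [m]
      else if B = [] then k :: m :: A else fkt k A ++ m :: B := by
  obtain ⟨x, xs, h⟩ := List.exists_cons_of_ne_nil (List.append_ne_nil_of_right_ne_nil A
    (List.cons_ne_nil m B))
  have hne : ∀ a ∈ A, a ≠ m := fun a ha => (hA a ha).ne'
  rw [h, fkt.eq_2, foldr_min_eq_of_append_cons h.symm hA hB, ← h,
    takeWhile_append_cons_ne hne, dropWhile_append_cons_ne hne, List.tail_cons]

theorem des_cons_cons (a b : ℕ) (l : List ℕ) :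
    des (a :: b :: l) = des (b :: l) + if b < a then 1 else 0 := by
  simp only [des, List.length_cons, Nat.add_sub_cancel]
  rw [Finset.card_filter, Finset.card_filter, Finset.sum_range_succ']
  simp

theorem des_cons_of_forall_le {a : ℕ} {l : List ℕ} (h : ∀ b ∈ l, a ≤ b) : des (a :: l) = des l := by
  rcases l with _ | ⟨b, l⟩
  · rfl
  · rw [des_cons_cons, if_neg (h b (by simp)).not_gt, Nat.add_zero]

theorem des_append_cons_of_lt_getLast {u : List ℕ} (hu : u ≠ []) {b : ℕ} (v : List ℕ)
    (h : b < u.getLast hu) : des (u ++ b :: v) = des u + 1 + des (b :: v) := by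
  induction u with
  | nil => exact absurd rfl hu
  | cons a w ih =>
    rcases w with _ | ⟨c, w⟩
    · simp only [List.getLast_singleton] at h
      rw [List.singleton_append, des_cons_cons, if_pos h]
      change _ = 0 + 1 + _
      omega
    · rw [List.getLast_cons (List.cons_ne_nil c w)] at h
      rw [des_cons_cons a c w, List.cons_append, List.cons_append, des_cons_cons,
        ← List.cons_append, ih (List.cons_ne_nil c w) h]
      split_ifs <;> omega

theorem des_append_cons_of_forall_lt {u v : List ℕ} {m : ℕ} (hu : u ≠ [])
    (hmu : ∀ a ∈ u, m < a) (hmv : ∀ b ∈ v, m ≤ b) : des (u ++ m :: v) = des u + 1 + des v := by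
  rw [des_append_cons_of_lt_getLast hu v (hmu _ (List.getLast_mem hu)), des_cons_of_forall_le hmv]

theorem aix_singleton (a : ℕ) : aix [a] = 1 := by
  simpa [aix.eq_1] using aix_append_cons (A := []) (B := []) (m := a) (by simp) (by simp)

theorem fkt_perm (k : ℕ) (τ : List ℕ) : (fkt k τ).Perm (k :: τ) := by
  induction τ using induction_on_append_cons_min with
  | nil => rw [fkt.eq_1]
  | append_cons A m B hA hB ihA ihB =>
    rw [fkt_append_cons k hA hB]
    split_ifs with hkm hA0 hB0
    · rfl
    · subst hA0
      exact (ihB.append_right [m]).trans (by simp)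
    · subst hB0
      exact ((List.perm_append_singleton m A).symm).cons k
    · exact ihA.append_right (m :: B)

def DesAixStep (τ σ : List ℕ) : Prop :=
  (des σ = des τ ∧ aix σ = aix τ + 1) ∨ (des τ < des σ ∧ aix σ = 0)

theorem DesAixStep.des_le {τ σ : List ℕ} (h : DesAixStep τ σ) : des τ ≤ des σ := by
  rcases h with ⟨h, -⟩ | ⟨h, -⟩ <;> omega

theorem desAixStep_cons {k : ℕ} {τ : List ℕ} (hk : ∀ a ∈ τ, k < a) : DesAixStep τ (k :: τ) := by
  refine Or.inl ⟨des_cons_of_forall_le fun a ha => (hk a ha).le, ?_⟩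
  simpa [Nat.add_comm] using
    aix_append_cons (A := []) (m := k) (B := τ) (by simp) fun a ha => (hk a ha).le

theorem desAixStep_append_singleton {m : ℕ} {B σ : List ℕ} (hσ : σ ≠ []) (hmσ : ∀ a ∈ σ, m < a)
    (hmB : ∀ b ∈ B, m ≤ b) (hdes : des B ≤ des σ) : DesAixStep (m :: B) (σ ++ [m]) := by
  refine Or.inr ⟨?_, ?_⟩
  · rw [des_cons_of_forall_le hmB, des_append_cons_of_forall_lt hσ hmσ (by simp)]
    change _ < _ + 1 + 0
    omega
  · rw [aix_append_cons hmσ (by simp), if_neg hσ, if_pos rfl]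

theorem desAixStep_cons_cons {k m : ℕ} {A : List ℕ} (hmk : m < k) (hA : A ≠ [])
    (hmA : ∀ a ∈ A, m < a) : DesAixStep (A ++ [m]) (k :: m :: A) := by
  refine Or.inl ⟨?_, ?_⟩
  · rw [des_cons_cons, if_pos hmk, des_cons_of_forall_le fun a ha => (hmA a ha).le,
      des_append_cons_of_forall_lt hA hmA (by simp)]
    rfl
  · have h := aix_append_cons (A := [k]) (B := A) (by simpa using hmk) fun a ha => (hmA a ha).le
    rw [if_neg (List.cons_ne_nil k []), if_neg hA, aix_singleton] at h
    rw [aix_append_cons hmA (by simp), if_neg hA, if_pos rfl]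
    exact h

theorem DesAixStep.append_cons {A σ B : List ℕ} {m : ℕ} (h : DesAixStep A σ) (hA : A ≠ [])
    (hσ : σ ≠ []) (hB : B ≠ []) (hmA : ∀ a ∈ A, m < a) (hmσ : ∀ a ∈ σ, m < a)
    (hmB : ∀ b ∈ B, m ≤ b) : DesAixStep (A ++ m :: B) (σ ++ m :: B) := by
  rw [DesAixStep, des_append_cons_of_forall_lt hA hmA hmB, des_append_cons_of_forall_lt hσ hmσ hmB,
    aix_append_cons hmA hmB, aix_append_cons hmσ hmB, if_neg hA, if_neg hσ, if_neg hB, if_neg hB]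
  rcases h with ⟨hdes, haix⟩ | ⟨hdes, haix⟩
  exacts [Or.inl ⟨by omega, haix⟩, Or.inr ⟨by omega, haix⟩]

theorem desAixStep_fkt (k : ℕ) (τ : List ℕ) (hτ : τ.Nodup) (hk : k ∉ τ) :
    DesAixStep τ (fkt k τ) := by
  induction τ using induction_on_append_cons_min with
  | nil => rw [fkt.eq_1]; exact desAixStep_cons (by simp)
  | append_cons A m B hmA hmB ihA ihB =>
    obtain ⟨hm_nmem, hBnd⟩ := List.nodup_cons.mp hτ.of_append_right
    -- without distinctness `f(k,β) m` could contain `m` twice and have positive `aix`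
    have hmB_lt : ∀ b ∈ B, m < b := fun b hb =>
      (hmB b hb).lt_of_ne (by rintro rfl; exact hm_nmem hb)
    have hkm : k ≠ m := by rintro rfl; simp at hk
    rw [fkt_append_cons k hmA hmB]
    rcases hkm.lt_or_gt with hkm | hmk
    · rw [if_pos hkm]
      refine desAixStep_cons fun a ha => ?_
      simp only [List.mem_append, List.mem_cons] at ha
      rcases ha with ha | rfl | ha
      exacts [hkm.trans (hmA a ha), hkm, hkm.trans_le (hmB a ha)]
    have fkt_ne_nil : ∀ C, fkt k C ≠ [] := fun C h => by simpa [h] using (fkt_perm k C).length_eq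
    have lt_of_mem_fkt : ∀ C, (∀ a ∈ C, m < a) → ∀ a ∈ fkt k C, m < a := fun C hC a ha => by
      rcases List.mem_cons.mp ((fkt_perm k C).mem_iff.mp ha) with rfl | ha
      exacts [hmk, hC a ha]
    rw [if_neg hmk.not_gt]
    split_ifs with hA hB
    · subst hA
      exact desAixStep_append_singleton (fkt_ne_nil B) (lt_of_mem_fkt B hmB_lt) hmB
        (ihB hBnd (by simp_all)).des_le
    · subst hB
      exact desAixStep_cons_cons hmk hA hmA
    · exact (ihA hτ.of_append_left (by simp_all)).append_cons hA (fkt_ne_nil A) hB hmA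
        (lt_of_mem_fkt A hmA) hmB

/-- `des f(k,τ) = des τ` iff `aix f(k,τ) = aix τ + 1`
(in particular `aix f(k,τ) > 0`), and `des f(k,τ) > des τ` iff
`aix f(k,τ) = 0`. -/
theorem des_fkt_iff_aix (k : ℕ) (τ : List ℕ) (hτ : τ.Nodup) (hk : k ∉ τ) :
    (des (fkt k τ) = des τ ↔ aix (fkt k τ) = aix τ + 1) ∧
    (des τ < des (fkt k τ) ↔ aix (fkt k τ) = 0) := by
  rcases desAixStep_fkt k τ hτ hk with ⟨hdes, haix⟩ | ⟨hdes, haix⟩ <;> omega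

end PaperStats
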